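/- Let 𝓡 be a finite set of relations whose attribute set 𝓐 is partitioned as 𝓐 = V₁ ∪ S ∪ V₂ (disjoint union), and suppose 𝓡 = 𝓡₁ ∪ 𝓡₂ where every R ∈ 𝓡₁ has attr(R) ⊆ V₁ ∪ S and every R ∈ 𝓡₂ has attr(R) ⊆ V₂ ∪ S. Then the join satisfies ⋈_{R∈𝓡} R = (⋈_{R∈𝓡₁} R) ⋈ (⋈_{R∈𝓡₂} R), and moreover π_{V₂∪S}(⋈_{R∈𝓡} R) = π_{V₂∪S}( (⋈_{R∈𝓡₂} R) ⋈ π_S(⋈_{R∈𝓡₁} R) ). -/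
import Mathlib


open scoped Classical

/-- Projection of a total tuple onto an attribute set. -/
noncomputable def proj {α V : Type*} (A : Finset α) (t : α → V) : α → Option V :=
  fun a => if a ∈ A then some (t a) else none

/-- Projection of a partial tuple onto an attribute set. -/
noncomputable def projO {α V : Type*} (A : Finset α) (t : α → Option V) : α → Option V :=
  fun a => if a ∈ A then t a else none

lemma projO_proj {α V : Type*} {A B : Finset α} (h : B ⊆ A) (t : α → V) :
    projO B (proj A t) = proj B t := by
  funext a
  simp only [projO, proj]
  by_cases hb : a ∈ B
  · simp [hb, h hb]
  · simp [hb]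

lemma proj_isSome {α V : Type*} (A : Finset α) (t : α → V) (a : α) :
    (proj A t a).isSome ↔ a ∈ A := by
  simp only [proj]; by_cases h : a ∈ A <;> simp [h]

/-- Split transform correctness: if the attributes are partitioned as `V₁ ∪ S ∪ V₂` with the
relations of `𝓡₁` over `V₁ ∪ S` and those of `𝓡₂` over `V₂ ∪ S`, then
`⋈𝓡 = (⋈𝓡₁) ⋈ (⋈𝓡₂)` and `π_{V₂∪S}(⋈𝓡) = π_{V₂∪S}((⋈𝓡₂) ⋈ π_S(⋈𝓡₁))`. -/
theorem stmt15 {α V : Type*} [Fintype α] {ι₁ ι₂ : Type*}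
    (V₁ S V₂ : Finset α)
    (h12 : Disjoint V₁ S) (h13 : Disjoint V₁ V₂) (h23 : Disjoint S V₂)
    (hcov : V₁ ∪ S ∪ V₂ = Finset.univ)
    (attr₁ : ι₁ → Finset α) (Rel₁ : ι₁ → Finset (α → Option V))
    (attr₂ : ι₂ → Finset α) (Rel₂ : ι₂ → Finset (α → Option V))
    (ha₁ : ∀ i, attr₁ i ⊆ V₁ ∪ S) (ha₂ : ∀ i, attr₂ i ⊆ V₂ ∪ S) :
    let J : Set (α → V) :=
      {t | (∀ i, proj (attr₁ i) t ∈ Rel₁ i) ∧ (∀ i, proj (attr₂ i) t ∈ Rel₂ i)}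
    let J₁ : Set (α → Option V) :=
      {u | (∀ a, (u a).isSome ↔ a ∈ V₁ ∪ S) ∧ ∀ i, projO (attr₁ i) u ∈ Rel₁ i}
    let J₂ : Set (α → Option V) :=
      {u | (∀ a, (u a).isSome ↔ a ∈ V₂ ∪ S) ∧ ∀ i, projO (attr₂ i) u ∈ Rel₂ i}
    (J = {t | proj (V₁ ∪ S) t ∈ J₁ ∧ proj (V₂ ∪ S) t ∈ J₂}) ∧
    (proj (V₂ ∪ S) '' J = {w ∈ J₂ | projO S w ∈ projO S '' J₁}) := by
  intro J J₁ J₂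
  have hJeq : J = {t | proj (V₁ ∪ S) t ∈ J₁ ∧ proj (V₂ ∪ S) t ∈ J₂} := by
    ext t
    constructor
    · rintro ⟨h1, h2⟩
      refine ⟨⟨fun a => proj_isSome _ _ _, fun i => ?_⟩,
              ⟨fun a => proj_isSome _ _ _, fun i => ?_⟩⟩
      · rw [projO_proj (ha₁ i)]; exact h1 i
      · rw [projO_proj (ha₂ i)]; exact h2 i
    · rintro ⟨⟨_, h1⟩, ⟨_, h2⟩⟩
      refine ⟨fun i => ?_, fun i => ?_⟩
      · have := h1 i; rwa [projO_proj (ha₁ i)] at this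
      · have := h2 i; rwa [projO_proj (ha₂ i)] at this
  refine ⟨hJeq, ?_⟩
  ext w
  constructor
  · rintro ⟨t, ht, rfl⟩
    rw [hJeq] at ht
    obtain ⟨ht1, ht2⟩ := ht
    refine ⟨ht2, proj (V₁ ∪ S) t, ht1, ?_⟩
    rw [projO_proj (Finset.subset_union_right), projO_proj (Finset.subset_union_right)]
  · rintro ⟨hw2, u, hu1, huS⟩
    have hwS : ∀ a ∈ S, u a = w a := by
      intro a ha
      have := congrFun huS a
      simpa [projO, ha] using this
    have husome : ∀ a, (u a).isSome ↔ a ∈ V₁ ∪ S := hu1.1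
    have hwsome : ∀ a, (w a).isSome ↔ a ∈ V₂ ∪ S := hw2.1
    have hget : ∀ a, a ∉ V₂ ∪ S → (u a).isSome := by
      intro a ha
      rw [husome]
      have : a ∈ V₁ ∪ S ∪ V₂ := hcov ▸ Finset.mem_univ a
      rcases Finset.mem_union.1 this with h | h
      · exact h
      · exact absurd (Finset.mem_union_left _ h) ha
    let t : α → V := fun a =>
      if h : a ∈ V₂ ∪ S then (w a).get ((hwsome a).2 h) else (u a).get (hget a h)
    have htpos : ∀ a (h : a ∈ V₂ ∪ S), some (t a) = w a := by
      intro a h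
      show some (dite _ _ _) = w a
      rw [dif_pos h, Option.some_get]
    have htneg : ∀ a (h : a ∉ V₂ ∪ S), some (t a) = u a := by
      intro a h
      show some (dite _ _ _) = u a
      rw [dif_neg h, Option.some_get]
    have hproj2 : proj (V₂ ∪ S) t = w := by
      funext a
      by_cases h : a ∈ V₂ ∪ S
      · rw [proj, if_pos h]; exact htpos a h
      · have hn : w a = none := by
          rw [← Option.not_isSome_iff_eq_none]
          exact fun hs => h ((hwsome a).1 hs)
        rw [proj, if_neg h, hn]
    have hproj1 : proj (V₁ ∪ S) t = u := by
      funext a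
      by_cases h : a ∈ V₁ ∪ S
      · rw [proj, if_pos h]
        by_cases h2 : a ∈ V₂ ∪ S
        · have haS : a ∈ S := by
            rcases Finset.mem_union.1 h with h' | h'
            · rcases Finset.mem_union.1 h2 with h'' | h''
              · exact absurd h'' (Finset.disjoint_left.1 h13 h')
              · exact h''
            · exact h'
          rw [htpos a h2, hwS a haS]
        · exact htneg a h2
      · have hn : u a = none := by
          rw [← Option.not_isSome_iff_eq_none]
          exact fun hs => h ((husome a).1 hs)
        rw [proj, if_neg h, hn]
    refine ⟨t, ?_, hproj2⟩
    rw [hJeq]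
    exact ⟨hproj1 ▸ hu1, hproj2 ▸ hw2⟩
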